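/- Let C be a right Hopf-Galois co-object over a Hopf algebra H with antipode S and cotranslation map τ. Then τ(a·τ(b⊗c) ⊗ d) = S(τ(b⊗c))·τ(a⊗d) for all a,b,c,d ∈ C. -/

import Mathlib

/-!
Since `τ ∘ can = ε ⊗ id` and `can` is onto, `τ` is right `H`-linear in its second argument and
`τ ∘ Δ = ε(·) 1`. For fixed `c` the form `B(x ⊗ y) = Σ τ(c₁·x ⊗ c₂·y)` therefore satisfies
`B(Δh) = ε(c) ε(h) 1` and `B(x ⊗ yk) = B(x ⊗ y) k`, and writing `h ⊗ 1 = Σ h₁ ⊗ h₂ S(h₃)` forces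
`B(h ⊗ 1) = ε(c) S(h)`. Hence `τ((a·h) ⊗ d) = S(h) τ(a ⊗ d)` holds on the image
`c ⊗ k ↦ Σ c₁ ⊗ c₂·k` of `can`, which is everything.
-/

open Coalgebra TensorProduct

universe u v w

/-- The canonical map `C ⊗ H → C ⊗ C`, `c ⊗ h ↦ Σ c₁ ⊗ c₂·h`, for a right action
`act` of `H` on `C`. -/
noncomputable def canMap {F : Type u} {C : Type v} {H : Type w} [Field F]
    [AddCommGroup C] [Module F C] [Coalgebra F C] [AddCommGroup H] [Module F H]
    (act : C →ₗ[F] H →ₗ[F] C) : C ⊗[F] H →ₗ[F] C ⊗[F] C :=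
  (LinearMap.lTensor C (TensorProduct.lift act)) ∘ₗ
    (TensorProduct.assoc F C C H).toLinearMap ∘ₗ
    (LinearMap.rTensor H (comul (R := F)))

/-- The cotranslation map `τ = (ε ⊗ id) ∘ can⁻¹ : C ⊗ C → H`, where `inv` is the
inverse of the canonical map. -/
noncomputable def cotr {F : Type u} {C : Type v} {H : Type w} [Field F]
    [AddCommGroup C] [Module F C] [Coalgebra F C] [AddCommGroup H] [Module F H]
    (inv : C ⊗[F] C →ₗ[F] C ⊗[F] H) : C ⊗[F] C →ₗ[F] H :=
  (TensorProduct.lid F H).toLinearMap ∘ₗ (LinearMap.rTensor H (counit (R := F))) ∘ₗ inv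

theorem HopfAlgebra.apply_tmul_one_eq_mul_antipode {R H : Type*} [CommSemiring R] [Semiring H]
    [HopfAlgebra R H] (B : H ⊗[R] H →ₗ[R] H) (e : H)
    (hB_mul : ∀ x y k : H, B (x ⊗ₜ (y * k)) = B (x ⊗ₜ y) * k)
    (hB_comul : ∀ x : H, B (comul x) = counit (R := R) x • e) (h : H) :
    B (h ⊗ₜ 1) = e * antipode R h := by
  set rh := ℛ R h
  set T : H ⊗[R] (H ⊗[R] H) →ₗ[R] H :=
    LinearMap.mul' R H ∘ₗ map B (antipode R) ∘ₗ (TensorProduct.assoc R H H H).symm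
  have hT : ∀ x y z : H, T (x ⊗ₜ (y ⊗ₜ z)) = B (x ⊗ₜ y) * antipode R z := fun _ _ _ => rfl
  have coassoc := congrArg T <|
    sum_tmul_tmul_eq rh (fun j => ℛ R (rh.left j)) (fun j => ℛ R (rh.right j))
  simp only [map_sum, hT] at coassoc
  have h_tmul_one : ∑ j ∈ rh.index, rh.left j ⊗ₜ algebraMap R H (counit (rh.right j))
      = h ⊗ₜ[R] (1 : H) := by
    have := congrArg (LinearMap.lTensor H (Algebra.linearMap R H)) (sum_tmul_counit_eq rh)
    simpa only [map_sum, LinearMap.lTensor_tmul, Algebra.linearMap_apply, map_one] using this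
  calc B (h ⊗ₜ 1)
      = ∑ j ∈ rh.index, ∑ k ∈ (ℛ R (rh.right j)).index,
          B (rh.left j ⊗ₜ (ℛ R (rh.right j)).left k) * antipode R ((ℛ R (rh.right j)).right k) := by
        rw [← h_tmul_one, map_sum]
        refine Finset.sum_congr rfl fun j _ => ?_
        rw [← sum_mul_antipode_eq_algebraMap_counit (ℛ R (rh.right j)), tmul_sum, map_sum]
        simp only [hB_mul]
    _ = ∑ j ∈ rh.index, B (comul (rh.left j)) * antipode R (rh.right j) := by
        rw [← coassoc]
        refine Finset.sum_congr rfl fun j _ => ?_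
        rw [← (ℛ R (rh.left j)).eq, map_sum, Finset.sum_mul]
    _ = e * antipode R h := by
        simp only [hB_comul, smul_mul_assoc, ← mul_smul_comm, ← Finset.mul_sum, ← map_smul,
          ← map_sum, sum_counit_smul]

section HopfGalois

variable {F : Type u} {C : Type v} [Field F] [AddCommGroup C] [Module F C] [Coalgebra F C]

section Module

variable {H : Type w} [AddCommGroup H] [Module F H] {act : C →ₗ[F] H →ₗ[F] C}
  {inv : C ⊗[F] C →ₗ[F] C ⊗[F] H}

theorem canMap_tmul {c : C} {ι : Type*} (rc : Repr F c ι) (h : H) :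
    canMap act (c ⊗ₜ h) = ∑ i ∈ rc.index, rc.left i ⊗ₜ act (rc.right i) h := by
  simp only [canMap, LinearMap.coe_comp, Function.comp_apply, LinearEquiv.coe_coe,
    LinearMap.rTensor_tmul, ← rc.eq, sum_tmul, map_sum, TensorProduct.assoc_tmul,
    LinearMap.lTensor_tmul, lift.tmul]

theorem canMap_surjective (hinv₁ : canMap act ∘ₗ inv = LinearMap.id) :
    Function.Surjective (canMap act) :=
  fun z => ⟨inv z, LinearMap.congr_fun hinv₁ z⟩

theorem cotr_canMap_tmul (hinv₂ : inv ∘ₗ canMap act = LinearMap.id) (c : C) (h : H) :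
    cotr inv (canMap act (c ⊗ₜ h)) = counit (R := F) c • h := by
  have hinv : inv (canMap act (c ⊗ₜ h)) = c ⊗ₜ h := LinearMap.congr_fun hinv₂ (c ⊗ₜ h)
  simp [cotr, hinv]

end Module

section Algebra

variable {H : Type w} [Ring H] [Algebra F H] {act : C →ₗ[F] H →ₗ[F] C}
  {inv : C ⊗[F] C →ₗ[F] C ⊗[F] H}

theorem canMap_tmul_one (hact_one : ∀ c : C, act c 1 = c) (c : C) :
    canMap act (c ⊗ₜ 1) = comul (R := F) c := by
  simp only [canMap_tmul (ℛ F c), hact_one, (ℛ F c).eq]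

theorem cotr_comul (hact_one : ∀ c : C, act c 1 = c)
    (hinv₂ : inv ∘ₗ canMap act = LinearMap.id) (c : C) :
    cotr inv (comul (R := F) c) = counit (R := F) c • (1 : H) := by
  rw [← canMap_tmul_one hact_one, cotr_canMap_tmul hinv₂]

theorem lTensor_flip_canMap_tmul (hact_mul : ∀ (c : C) (h k : H), act (act c h) k = act c (h * k))
    (c : C) (h k : H) :
    LinearMap.lTensor C (act.flip k) (canMap act (c ⊗ₜ h)) = canMap act (c ⊗ₜ (h * k)) := by
  simp only [canMap_tmul (ℛ F c), map_sum, LinearMap.lTensor_tmul, LinearMap.flip_apply,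
    hact_mul]

theorem cotr_tmul_act (hact_mul : ∀ (c : C) (h k : H), act (act c h) k = act c (h * k))
    (hinv₁ : canMap act ∘ₗ inv = LinearMap.id) (hinv₂ : inv ∘ₗ canMap act = LinearMap.id)
    (a b : C) (k : H) :
    cotr inv (a ⊗ₜ act b k) = cotr inv (a ⊗ₜ b) * k := by
  suffices cotr inv ∘ₗ LinearMap.lTensor C (act.flip k) = LinearMap.mulRight F k ∘ₗ cotr inv from
    LinearMap.congr_fun this (a ⊗ₜ b)
  refine (LinearMap.cancel_right (canMap_surjective hinv₁)).mp (TensorProduct.ext' fun c h => ?_)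
  simp only [LinearMap.comp_apply, lTensor_flip_canMap_tmul hact_mul, cotr_canMap_tmul hinv₂,
    LinearMap.mulRight_apply, smul_mul_assoc]

end Algebra

section HopfAlgebra

variable {H : Type w} [Ring H] [HopfAlgebra F H] {act : C →ₗ[F] H →ₗ[F] C}
  {inv : C ⊗[F] C →ₗ[F] C ⊗[F] H}

theorem sum_cotr_act_tmul (hact_one : ∀ c : C, act c 1 = c)
    (hact_mul : ∀ (c : C) (h k : H), act (act c h) k = act c (h * k))
    (hact_comul : ∀ (c : C) (h : H) (ιc : Type v) (rc : Coalgebra.Repr F c ιc)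
      (ιh : Type w) (rh : Coalgebra.Repr F h ιh),
      comul (R := F) (act c h) = ∑ i ∈ rc.index, ∑ j ∈ rh.index,
        act (rc.left i) (rh.left j) ⊗ₜ[F] act (rc.right i) (rh.right j))
    (hact_counit : ∀ (c : C) (h : H),
      counit (R := F) (act c h) = counit (R := F) c * counit (R := F) h)
    (hinv₁ : canMap act ∘ₗ inv = LinearMap.id) (hinv₂ : inv ∘ₗ canMap act = LinearMap.id)
    {c : C} {ι : Type v} (rc : Repr F c ι) (h : H) :
    ∑ i ∈ rc.index, cotr inv (act (rc.left i) h ⊗ₜ rc.right i) =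
      counit (R := F) c • HopfAlgebra.antipode F h := by
  set B : H ⊗[F] H →ₗ[F] H :=
    ∑ i ∈ rc.index, cotr inv ∘ₗ TensorProduct.map (act (rc.left i)) (act (rc.right i))
  have hB : ∀ x y : H,
      B (x ⊗ₜ y) = ∑ i ∈ rc.index, cotr inv (act (rc.left i) x ⊗ₜ act (rc.right i) y) :=
    fun x y => by simp [B, LinearMap.sum_apply]
  have hB_mul : ∀ x y k : H, B (x ⊗ₜ (y * k)) = B (x ⊗ₜ y) * k := by
    intro x y k
    simp only [hB, Finset.sum_mul, ← hact_mul, cotr_tmul_act hact_mul hinv₁ hinv₂]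
  have hB_comul : ∀ x : H, B (comul x) = counit (R := F) x • (counit (R := F) c • (1 : H)) := by
    intro x
    rw [← (ℛ F x).eq, map_sum]
    simp only [hB]
    rw [Finset.sum_comm]
    have hsum := congrArg (cotr inv) (hact_comul c x _ rc _ (ℛ F x))
    simp only [map_sum] at hsum
    rw [← hsum, cotr_comul hact_one hinv₂, hact_counit, mul_comm, mul_smul]
  have := HopfAlgebra.apply_tmul_one_eq_mul_antipode B _ hB_mul hB_comul h
  simpa only [hB, hact_one, smul_mul_assoc, one_mul] using this

theorem cotr_act_tmul (hact_one : ∀ c : C, act c 1 = c)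
    (hact_mul : ∀ (c : C) (h k : H), act (act c h) k = act c (h * k))
    (hact_comul : ∀ (c : C) (h : H) (ιc : Type v) (rc : Coalgebra.Repr F c ιc)
      (ιh : Type w) (rh : Coalgebra.Repr F h ιh),
      comul (R := F) (act c h) = ∑ i ∈ rc.index, ∑ j ∈ rh.index,
        act (rc.left i) (rh.left j) ⊗ₜ[F] act (rc.right i) (rh.right j))
    (hact_counit : ∀ (c : C) (h : H),
      counit (R := F) (act c h) = counit (R := F) c * counit (R := F) h)
    (hinv₁ : canMap act ∘ₗ inv = LinearMap.id) (hinv₂ : inv ∘ₗ canMap act = LinearMap.id)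
    (h : H) (a d : C) :
    cotr inv (act a h ⊗ₜ d) = HopfAlgebra.antipode F h * cotr inv (a ⊗ₜ d) := by
  suffices cotr inv ∘ₗ LinearMap.rTensor C (act.flip h) =
      LinearMap.mulLeft F (HopfAlgebra.antipode F h) ∘ₗ cotr inv from
    LinearMap.congr_fun this (a ⊗ₜ d)
  refine (LinearMap.cancel_right (canMap_surjective hinv₁)).mp (TensorProduct.ext' fun c k => ?_)
  simp only [LinearMap.comp_apply, cotr_canMap_tmul hinv₂, LinearMap.mulLeft_apply]
  rw [canMap_tmul (ℛ F c), map_sum, map_sum]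
  simp only [LinearMap.rTensor_tmul, LinearMap.flip_apply, cotr_tmul_act hact_mul hinv₁ hinv₂,
    ← Finset.sum_mul, sum_cotr_act_tmul hact_one hact_mul hact_comul hact_counit hinv₁ hinv₂,
    smul_mul_assoc, mul_smul_comm]

end HopfAlgebra

end HopfGalois

theorem cotr_antipode_mul_general {F : Type u} {C : Type v} {H : Type w} [Field F]
    [AddCommGroup C] [Module F C] [Coalgebra F C] [Ring H] [HopfAlgebra F H]
    (act : C →ₗ[F] H →ₗ[F] C)
    (hact_one : ∀ c : C, act c 1 = c)
    (hact_mul : ∀ (c : C) (h k : H), act (act c h) k = act c (h * k))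
    (hact_comul : ∀ (c : C) (h : H) (ιc : Type v) (rc : Coalgebra.Repr F c ιc)
      (ιh : Type w) (rh : Coalgebra.Repr F h ιh),
      comul (R := F) (act c h) = ∑ i ∈ rc.index, ∑ j ∈ rh.index,
        act (rc.left i) (rh.left j) ⊗ₜ[F] act (rc.right i) (rh.right j))
    (hact_counit : ∀ (c : C) (h : H),
      counit (R := F) (act c h) = counit (R := F) c * counit (R := F) h)
    (inv : C ⊗[F] C →ₗ[F] C ⊗[F] H)
    (hinv₁ : canMap act ∘ₗ inv = LinearMap.id)
    (hinv₂ : inv ∘ₗ canMap act = LinearMap.id)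
    :
    ∀ a b c d : C,
      cotr inv (act a (cotr inv (b ⊗ₜ[F] c)) ⊗ₜ[F] d) =
        HopfAlgebra.antipode (R := F) (cotr inv (b ⊗ₜ[F] c)) * cotr inv (a ⊗ₜ[F] d) :=
  fun a b c d =>
    cotr_act_tmul hact_one hact_mul hact_comul hact_counit hinv₁ hinv₂ (cotr inv (b ⊗ₜ c)) a d

/-- `τ(a·τ(b⊗c) ⊗ d) = S(τ(b⊗c))·τ(a⊗d)`. -/
theorem cotr_antipode_mul {F : Type u} {C : Type v} {H : Type w} [Field F]
    [AddCommGroup C] [Module F C] [Coalgebra F C] [Ring H] [HopfAlgebra F H]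
    (act : C →ₗ[F] H →ₗ[F] C)
    (hact_one : ∀ c : C, act c 1 = c)
    (hact_mul : ∀ (c : C) (h k : H), act (act c h) k = act c (h * k))
    (hact_comul : ∀ (c : C) (h : H) (ιc : Type v) (rc : Coalgebra.Repr F c ιc)
      (ιh : Type w) (rh : Coalgebra.Repr F h ιh),
      comul (R := F) (act c h) = ∑ i ∈ rc.index, ∑ j ∈ rh.index,
        act (rc.left i) (rh.left j) ⊗ₜ[F] act (rc.right i) (rh.right j))
    (hact_counit : ∀ (c : C) (h : H),
      counit (R := F) (act c h) = counit (R := F) c * counit (R := F) h)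
    (hker : LinearMap.ker (counit (R := F) : C →ₗ[F] F) =
      Submodule.span F {x : C | ∃ (c : C) (h : H), x = act c h - counit (R := F) h • c})
    (inv : C ⊗[F] C →ₗ[F] C ⊗[F] H)
    (hinv₁ : canMap act ∘ₗ inv = LinearMap.id)
    (hinv₂ : inv ∘ₗ canMap act = LinearMap.id)
    :
    ∀ a b c d : C,
      cotr inv (act a (cotr inv (b ⊗ₜ[F] c)) ⊗ₜ[F] d) =
        HopfAlgebra.antipode (R := F) (cotr inv (b ⊗ₜ[F] c)) * cotr inv (a ⊗ₜ[F] d) :=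
  cotr_antipode_mul_general act hact_one hact_mul hact_comul hact_counit inv hinv₁ hinv₂
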